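/- (Theorem 2 of the paper, gradient formula: the Euclidean parametrization reduces the gradient-vanishing power from δ² to δ.) Let n ≥ 1, E = EuclideanSpace ℝ (Fin n), e := EuclideanSpace.single 0 1, c > 0, z := c • e, and x := F_D(z) = Real.tanh (c/2) • e. Let f : E → ℝ be differentiable at x with gradient f x = E' • e for some real E'. Then the gradient of h := f ∘ F_D at z equals ((E' * (1 - Real.tanh (c/2)^2))/2) • e; in particular ‖gradient h z‖ = (|E'|/2) * (1 - Real.tanh (c/2)^2), so if tanh(c/2) = 1 - δ then ‖gradient h z‖ = (δ(2-δ)/2) * ‖gradient f x‖ ≥ (δ/2) * ‖gradient f x‖. -/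

import Mathlib

/-!
`F_D` is the radial extension `w ↦ (ψ ‖w‖ / ‖w‖) • w` of `ψ r = tanh (r / 2)`. At `z = r • u`
with `‖u‖ = 1` its derivative is self-adjoint, acts as `ψ r / r` on `(ℝ ∙ u)ᗮ` and as `ψ' r` on `u`.
Hence a gradient of `f` pointing along `u` pulls back to `ψ' r` times itself, and
`ψ' r = (1 - tanh² (r / 2)) / 2`, which equals `δ (2 - δ) / 2` when `tanh (r / 2) = 1 - δ`.
-/

open RealInnerProductSpace

/-- The Euclidean parametrization of the Poincaré ball, `F_D(z) = (tanh(‖z‖/2)/‖z‖) • z`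
(which equals `0` at `z = 0`). -/
noncomputable def FD {n : ℕ} (z : EuclideanSpace ℝ (Fin n)) : EuclideanSpace ℝ (Fin n) :=
  (Real.tanh (‖z‖ / 2) / ‖z‖) • z

namespace Real

theorem hasDerivAt_tanh (x : ℝ) : HasDerivAt tanh (1 - tanh x ^ 2) x := by
  have hcosh : cosh x ≠ 0 := (cosh_pos x).ne'
  rw [show tanh = fun y => sinh y / cosh y from funext tanh_eq_sinh_div_cosh]
  refine ((hasDerivAt_sinh x).div (hasDerivAt_cosh x) hcosh).congr_deriv ?_
  field_simp

theorem tanh_nonneg {x : ℝ} (hx : 0 ≤ x) : 0 ≤ tanh x := by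
  rw [tanh_eq_sinh_div_cosh]
  exact div_nonneg (sinh_nonneg_iff.mpr hx) (cosh_pos x).le

end Real

theorem hasDerivAt_tanh_half (c : ℝ) :
    HasDerivAt (fun r => Real.tanh (r / 2)) ((1 - Real.tanh (c / 2) ^ 2) / 2) c := by
  refine ((Real.hasDerivAt_tanh (c / 2)).comp c ((hasDerivAt_id c).div_const 2)).congr_deriv ?_
  ring

section Radial

variable {E : Type*} [NormedAddCommGroup E] [InnerProductSpace ℝ E]

noncomputable def radialMap (ψ : ℝ → ℝ) (w : E) : E := (ψ ‖w‖ / ‖w‖) • w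

theorem FD_eq_radialMap {n : ℕ} :
    (FD : EuclideanSpace ℝ (Fin n) → _) = radialMap fun r => Real.tanh (r / 2) := rfl

theorem radialMap_smul_of_norm_eq_one (ψ : ℝ → ℝ) {u : E} (hu : ‖u‖ = 1) {r : ℝ} (hr : 0 < r) :
    radialMap ψ (r • u) = ψ r • u := by
  rw [radialMap, norm_smul, hu, mul_one, Real.norm_of_nonneg hr.le, smul_smul,
    div_mul_cancel₀ _ hr.ne']

theorem hasFDerivAt_norm_of_ne_zero {z : E} (hz : z ≠ 0) :
    HasFDerivAt (‖·‖) (‖z‖⁻¹ • innerSL ℝ z) z := by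
  have hsq : ‖z‖ ^ 2 ≠ 0 := by positivity
  convert (hasStrictFDerivAt_norm_sq z).hasFDerivAt.sqrt hsq using 1
  · ext w; exact (Real.sqrt_sq (norm_nonneg w)).symm
  · ext w
    simp [Real.sqrt_sq (norm_nonneg z)]
    field_simp

theorem hasFDerivAt_radialMap {ψ : ℝ → ℝ} {ψ' : ℝ} {z : E} (hz : z ≠ 0)
    (hψ : HasDerivAt ψ ψ' ‖z‖) :
    HasFDerivAt (radialMap ψ)
      ((ψ ‖z‖ / ‖z‖) • ContinuousLinearMap.id ℝ E +
        ((ψ' * ‖z‖ - ψ ‖z‖) / ‖z‖ ^ 3) • (innerSL ℝ z).smulRight z) z := by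
  have hnorm : ‖z‖ ≠ 0 := norm_ne_zero_iff.mpr hz
  have hφ := (hψ.div (hasDerivAt_id _) hnorm).comp_hasFDerivAt z (hasFDerivAt_norm_of_ne_zero hz)
  refine (hφ.smul (hasFDerivAt_id z)).congr_fderiv ?_
  ext v
  simp only [add_apply, smul_apply, ContinuousLinearMap.smulRight_apply, innerSL_apply_apply,
    smul_smul, smul_eq_mul, Function.comp_apply, Pi.div_apply, id_eq, mul_one]
  congr 2
  ring

variable [CompleteSpace E]

theorem HasGradientAt.comp_hasFDerivAt_of_inner_eq {F : Type*} [NormedAddCommGroup F]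
    [InnerProductSpace ℝ F] [CompleteSpace F] {f : F → ℝ} {g : F} {φ : E → F}
    {L : E →L[ℝ] F} {g' x : E} (hf : HasGradientAt f g (φ x)) (hφ : HasFDerivAt φ L x)
    (hL : ∀ v, ⟪g, L v⟫ = ⟪g', v⟫) : HasGradientAt (f ∘ φ) g' x := by
  rw [hasGradientAt_iff_hasFDerivAt]
  refine (hf.hasFDerivAt.comp x hφ).congr_fderiv ?_
  ext v
  simp [hL]

theorem HasGradientAt.comp_radialMap {f : E → ℝ} {ψ : ℝ → ℝ} {ψ' a r : ℝ} {u : E}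
    (hu : ‖u‖ = 1) (hr : 0 < r) (hψ : HasDerivAt ψ ψ' r)
    (hf : HasGradientAt f (a • u) (radialMap ψ (r • u))) :
    HasGradientAt (f ∘ radialMap ψ) ((a * ψ') • u) (r • u) := by
  have hnorm : ‖r • u‖ = r := by rw [norm_smul, hu, mul_one, Real.norm_of_nonneg hr.le]
  have hz : r • u ≠ 0 := by rw [← norm_ne_zero_iff, hnorm]; exact hr.ne'
  refine hf.comp_hasFDerivAt_of_inner_eq (hasFDerivAt_radialMap hz (hnorm ▸ hψ)) fun v => ?_
  have huu : ⟪u, u⟫ = 1 := by rw [real_inner_self_eq_norm_sq, hu, one_pow]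
  simp only [hnorm, add_apply, smul_apply, ContinuousLinearMap.smulRight_apply,
    innerSL_apply_apply, ContinuousLinearMap.id_apply, inner_add_right, real_inner_smul_left,
    real_inner_smul_right, huu]
  field_simp
  ring

end Radial

theorem gradient_of_euclidean_parametrization (n : ℕ) (hn : 0 < n) (c : ℝ) (hc : 0 < c)
    (f : EuclideanSpace ℝ (Fin n) → ℝ) (E' : ℝ)
    (e : EuclideanSpace ℝ (Fin n)) (he : e = EuclideanSpace.single (⟨0, hn⟩ : Fin n) 1)
    (z : EuclideanSpace ℝ (Fin n)) (hzdef : z = c • e)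
    (hf : DifferentiableAt ℝ f (FD z))
    (hgrad : gradient f (FD z) = E' • e) :
    FD z = Real.tanh (c / 2) • e ∧
    gradient (f ∘ FD) z = ((E' * (1 - Real.tanh (c / 2) ^ 2)) / 2) • e ∧
    ‖gradient (f ∘ FD) z‖ = (|E'| / 2) * (1 - Real.tanh (c / 2) ^ 2) ∧
    ∀ δ : ℝ, Real.tanh (c / 2) = 1 - δ →
      ‖gradient (f ∘ FD) z‖ = (δ * (2 - δ) / 2) * ‖gradient f (FD z)‖ ∧
      (δ / 2) * ‖gradient f (FD z)‖ ≤ ‖gradient (f ∘ FD) z‖ := by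
  have he1 : ‖e‖ = 1 := by simp [he]
  have hFD : FD z = Real.tanh (c / 2) • e := by
    rw [hzdef, FD_eq_radialMap, radialMap_smul_of_norm_eq_one _ he1 hc]
  have hgradFD : gradient (f ∘ FD) z = ((E' * (1 - Real.tanh (c / 2) ^ 2)) / 2) • e := by
    have hgradf := hf.hasGradientAt
    rw [hgrad, hzdef, FD_eq_radialMap] at hgradf
    rw [hzdef, FD_eq_radialMap, mul_div_assoc]
    exact (hgradf.comp_radialMap he1 hc (hasDerivAt_tanh_half c)).gradient
  have hnorm : ‖gradient (f ∘ FD) z‖ = (|E'| / 2) * (1 - Real.tanh (c / 2) ^ 2) := by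
    have : 0 ≤ 1 - Real.tanh (c / 2) ^ 2 := by linarith [Real.tanh_sq_lt_one (c / 2)]
    rw [hgradFD, norm_smul, he1, mul_one, Real.norm_eq_abs, abs_div, abs_mul, abs_of_nonneg this,
      abs_two]
    ring
  refine ⟨hFD, hgradFD, hnorm, fun δ hδ => ?_⟩
  have hgradf : ‖gradient f (FD z)‖ = |E'| := by
    rw [hgrad, norm_smul, he1, mul_one, Real.norm_eq_abs]
  have hδ0 : 0 < δ := by linarith [Real.tanh_lt_one (c / 2)]
  have hδ1 : δ ≤ 1 := by linarith [Real.tanh_nonneg (half_pos hc).le]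
  rw [hnorm, hgradf, hδ, show |E'| / 2 * (1 - (1 - δ) ^ 2) = δ * (2 - δ) / 2 * |E'| by ring]
  exact ⟨rfl, mul_le_mul_of_nonneg_right (by nlinarith) (abs_nonneg E')⟩
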